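/- arXiv:2408.16994 — 2 statements merged into one kernel-verified Lean document; each statement's English description precedes it below -/
import Mathlib

section
/- Let H be a complex Hilbert space, let T be a positive compact bounded linear operator on H, and let r ≥ 0. Then a vector x ∈ H satisfies limsup_{n→∞} ⟨T^n x, x⟩^{1/n} ≤ r if and only if x is orthogonal to every eigenvector of T whose eigenvalue is strictly greater than r. -/
/-!
If `v` is an eigenvector of `T` with eigenvalue `μ > r` and `⟪x, v⟫ ≠ 0`, positivity of `T ^ n`
gives `⟪T ^ n x, x⟫ ≥ μ ^ n ‖⟪v, x⟫‖² / ‖v‖²`, so the limsup is at least `μ`. Conversely, the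
orthogonal complement `K` of the eigenspaces with eigenvalues `> r` is `T`-invariant, and the
restriction of `T` to `K` is positive and compact without eigenvalues `> r`. Since a nonzero
positive compact operator has its norm as an eigenvalue (its spectral radius is its norm, and
nonzero spectral values of compact operators are eigenvalues), the restriction has norm `≤ r`,
whence `⟪T ^ n x, x⟫ ≤ r ^ n ‖x‖²` for `x ∈ K`.
-/

open scoped NNReal InnerProductSpace
open Filter Topology

/-- The absolute value `|T| = (T*T)^{1/2}` of a bounded operator on a complex Hilbert space. -/
noncomputable def opAbs {H : Type*} [NormedAddCommGroup H] [InnerProductSpace ℂ H]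
    [CompleteSpace H] (T : H →L[ℂ] H) : H →L[ℂ] H :=
  CFC.sqrt (ContinuousLinearMap.adjoint T * T)

/-- `|T ^ n| ^ (1 / n)`, via the continuous functional calculus. -/
noncomputable def absPow {H : Type*} [NormedAddCommGroup H] [InnerProductSpace ℂ H]
    [CompleteSpace H] (T : H →L[ℂ] H) (n : ℕ) : H →L[ℂ] H :=
  CFC.nnrpow (opAbs (T ^ n)) ((n : ℝ≥0))⁻¹

open scoped ComplexConjugate
open Module.End

section RootSequences

variable {a : ℕ → ℝ} {b c : ℝ}

lemma pow_mul_rpow_one_div (hc : 0 ≤ c) (hb : 0 ≤ b) {n : ℕ} (hn : n ≠ 0) :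
    (c ^ n * b) ^ (1 / n : ℝ) = c * b ^ (1 / n : ℝ) := by
  rw [Real.mul_rpow (pow_nonneg hc n) hb, ← Real.rpow_natCast, ← Real.rpow_mul hc,
    mul_one_div_cancel (Nat.cast_ne_zero.mpr hn), Real.rpow_one]

lemma tendsto_mul_rpow_one_div (c : ℝ) (hb : 0 < b) :
    Tendsto (fun n : ℕ => c * b ^ (1 / n : ℝ)) atTop (𝓝 c) := by
  have h := ((Real.continuousAt_const_rpow hb.ne').tendsto.comp
    tendsto_one_div_atTop_nhds_zero_nat).const_mul c
  simpa only [Function.comp_def, Real.rpow_zero, mul_one] using h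

lemma eventually_rpow_one_div_le (ha : ∀ n, 0 ≤ a n) (hc : 0 ≤ c) (hb : 0 ≤ b)
    (h : ∀ᶠ n in atTop, a n ≤ c ^ n * b) :
    ∀ᶠ n : ℕ in atTop, a n ^ (1 / n : ℝ) ≤ c * (b + 1) ^ (1 / n : ℝ) := by
  filter_upwards [h, eventually_ne_atTop 0] with n hn hn0
  calc a n ^ (1 / n : ℝ) ≤ (c ^ n * (b + 1)) ^ (1 / n : ℝ) := by
        gcongr
        · exact ha n
        · exact hn.trans (by gcongr; linarith)
    _ = c * (b + 1) ^ (1 / n : ℝ) := pow_mul_rpow_one_div hc (by linarith) hn0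

lemma isBoundedUnder_rpow_one_div (ha : ∀ n, 0 ≤ a n) (hc : 0 ≤ c) (hb : 0 ≤ b)
    (h : ∀ᶠ n in atTop, a n ≤ c ^ n * b) :
    IsBoundedUnder (· ≤ ·) atTop fun n : ℕ => a n ^ (1 / n : ℝ) :=
  (tendsto_mul_rpow_one_div c (by linarith)).isBoundedUnder_le.mono_le
    (eventually_rpow_one_div_le ha hc hb h)

lemma limsup_rpow_one_div_le (ha : ∀ n, 0 ≤ a n) (hc : 0 ≤ c) (hb : 0 ≤ b)
    (h : ∀ᶠ n in atTop, a n ≤ c ^ n * b) :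
    limsup (fun n : ℕ => a n ^ (1 / n : ℝ)) atTop ≤ c := by
  have hlim := tendsto_mul_rpow_one_div c (b := b + 1) (by linarith)
  rw [← hlim.limsup_eq]
  exact limsup_le_limsup (eventually_rpow_one_div_le ha hc hb h)
    (isCoboundedUnder_le_of_le atTop fun n => Real.rpow_nonneg (ha n) _)
    hlim.isBoundedUnder_le

lemma le_limsup_rpow_one_div
    (hbdd : IsBoundedUnder (· ≤ ·) atTop fun n : ℕ => a n ^ (1 / n : ℝ))
    (hc : 0 ≤ c) (hb : 0 < b) (h : ∀ᶠ n in atTop, c ^ n * b ≤ a n) :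
    c ≤ limsup (fun n : ℕ => a n ^ (1 / n : ℝ)) atTop := by
  have hlim := tendsto_mul_rpow_one_div c hb
  rw [← hlim.limsup_eq]
  refine limsup_le_limsup ?_ hlim.isCoboundedUnder_le hbdd
  filter_upwards [h, eventually_ne_atTop 0] with n hn hn0
  rw [← pow_mul_rpow_one_div hc hb.le hn0]
  exact Real.rpow_le_rpow (by positivity) hn (by positivity)

end RootSequences

section Eigenspaces

variable {𝕜 E : Type*} [RCLike 𝕜] [NormedAddCommGroup E] [InnerProductSpace 𝕜 E]
  {T : E →ₗ[𝕜] E} {ι : Type*}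

lemma LinearMap.IsSymmetric.orthogonal_iSup_eigenspace_invariant (hT : T.IsSymmetric)
    (f : ι → 𝕜) : ∀ v ∈ (⨆ i, eigenspace T (f i))ᗮ, T v ∈ (⨆ i, eigenspace T (f i))ᗮ := by
  rw [← Submodule.iInf_orthogonal]
  exact T.iInf_invariant fun i => hT.invariant_orthogonalComplement_eigenspace _

lemma LinearMap.IsSymmetric.not_hasEigenvalue_restrict_orthogonal_iSup_eigenspace
    (hT : T.IsSymmetric) (f : ι → 𝕜) (i : ι) :
    ¬HasEigenvalue (T.restrict (hT.orthogonal_iSup_eigenspace_invariant f)) (f i) := fun h =>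
  hasEigenvalue_iff.mp h <| eigenspace_restrict_eq_bot _ <|
    (Submodule.orthogonal_disjoint _).mono_left (le_iSup (fun i => eigenspace T (f i)) i)

end Eigenspaces

namespace ContinuousLinearMap

section RCLike

variable {𝕜 E : Type*} [RCLike 𝕜] [NormedAddCommGroup E] [InnerProductSpace 𝕜 E]

open RCLike

lemma pow_apply_of_apply_eq_smul {T : E →L[𝕜] E} {μ : 𝕜} {v : E} (hv : T v = μ • v) (n : ℕ) :
    (T ^ n) v = μ ^ n • v := by
  induction n with
  | zero => simp
  | succ n ih => rw [pow_succ', mul_apply_eq_comp, ih, map_smul, hv, smul_smul, ← pow_succ]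

lemma coe_restrict_pow_apply {T : E →L[𝕜] E} {V : Submodule 𝕜 E} (hV : ∀ v ∈ V, T v ∈ V)
    (n : ℕ) (x : V) : ((T.restrict hV ^ n) x : E) = (T ^ n) x := by
  induction n with
  | zero => rfl
  | succ n ih =>
    rw [pow_succ', mul_apply_eq_comp, coe_restrict_apply, ih, ← mul_apply_eq_comp, ← pow_succ']

lemma re_inner_pow_apply_self_le (A : E →L[𝕜] E) (x : E) {n : ℕ} (hn : n ≠ 0) :
    re ⟪(A ^ n) x, x⟫_𝕜 ≤ ‖A‖ ^ n * ‖x‖ ^ 2 :=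
  calc re ⟪(A ^ n) x, x⟫_𝕜 ≤ ‖(A ^ n) x‖ * ‖x‖ := re_inner_le_norm _ _
    _ ≤ ‖A‖ ^ n * ‖x‖ * ‖x‖ := by
      gcongr
      exact ((A ^ n).le_opNorm x).trans (by gcongr; exact norm_pow_le' A (Nat.pos_of_ne_zero hn))
    _ = ‖A‖ ^ n * ‖x‖ ^ 2 := by ring

lemma IsPositive.restrict {T : E →L[𝕜] E} (hT : T.IsPositive) {V : Submodule 𝕜 E}
    (hV : ∀ v ∈ V, T v ∈ V) : (T.restrict hV).IsPositive :=
  ⟨hT.isSymmetric.restrict_invariant hV, fun x => hT.re_inner_nonneg_left x⟩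

lemma IsPositive.mul_norm_inner_sq_div_le {A : E →L[𝕜] E} (hA : A.IsPositive) {μ : ℝ} {v : E}
    (hv : A v = (μ : 𝕜) • v) (x : E) :
    μ * (‖⟪v, x⟫_𝕜‖ ^ 2 / ‖v‖ ^ 2) ≤ re ⟪A x, x⟫_𝕜 := by
  rcases eq_or_ne v 0 with rfl | hv0
  · simpa using hA.re_inner_nonneg_left x
  have hs : ((‖v‖ : ℝ) : 𝕜) ≠ 0 := by simpa using hv0
  have hAxv : ⟪A x, v⟫_𝕜 = μ * conj ⟪v, x⟫_𝕜 := by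
    rw [hA.isSymmetric.apply_clm, hv, inner_smul_right, inner_conj_symm]
  -- test positivity on the component of `x` orthogonal to `v`
  have hexp : ⟪A (x - (⟪v, x⟫_𝕜 / (‖v‖ : 𝕜) ^ 2) • v), x - (⟪v, x⟫_𝕜 / (‖v‖ : 𝕜) ^ 2) • v⟫_𝕜
      = ⟪A x, x⟫_𝕜 - ((μ * (‖⟪v, x⟫_𝕜‖ ^ 2 / ‖v‖ ^ 2) : ℝ) : 𝕜) := by
    simp only [map_sub, map_smul, hv, inner_sub_left, inner_sub_right, inner_smul_left,
      inner_smul_right, hAxv, inner_self_eq_norm_sq_to_K, map_div₀, map_pow, conj_ofReal]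
    push_cast
    rw [← mul_conj]
    field_simp
    ring
  have key := hA.re_inner_nonneg_left (x - (⟪v, x⟫_𝕜 / (‖v‖ : 𝕜) ^ 2) • v)
  rw [hexp, map_sub, ofReal_re] at key
  linarith

end RCLike

section Complex

variable {E : Type*} [NormedAddCommGroup E] [InnerProductSpace ℂ E] [CompleteSpace E]
  {T : E →L[ℂ] E}

lemma IsPositive.pow (hT : T.IsPositive) (n : ℕ) : (T ^ n).IsPositive :=
  (T ^ n).nonneg_iff_isPositive.mp (CStarAlgebra.pow_nonneg (T.nonneg_iff_isPositive.mpr hT) n)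

lemma IsPositive.hasEigenvalue_norm (hT : T.IsPositive) (hTc : IsCompactOperator T)
    (hT0 : T ≠ 0) : HasEigenvalue (T : E →ₗ[ℂ] E) ‖T‖ := by
  have : Nontrivial (E →L[ℂ] E) := nontrivial_of_ne T 0 hT0
  obtain ⟨μ, hμ, hμT⟩ :=
    spectrum.exists_nnnorm_eq_spectralRadius_of_nonempty (spectrum.nonempty T)
  rw [hT.isSelfAdjoint.spectralRadius_eq_nnnorm, ENNReal.coe_inj] at hμT
  have hμT' : ‖μ‖ = ‖T‖ := congrArg NNReal.toReal hμT
  have hev : HasEigenvalue (T : E →ₗ[ℂ] E) μ :=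
    (hTc.hasEigenvalue_iff_mem_spectrum (by simpa [← norm_pos_iff, hμT'] using hT0)).mpr hμ
  have hμ_re : (μ.re : ℂ) = μ :=
    RCLike.conj_eq_iff_re.mp (hT.isSymmetric.conj_eigenvalue_eq_self hev)
  have hμ_nonneg : 0 ≤ μ.re :=
    eigenvalue_nonneg_of_nonneg (hμ_re.symm ▸ hev) hT.re_inner_nonneg_right
  rwa [← hμT', ← hμ_re, Complex.norm_real, Real.norm_of_nonneg hμ_nonneg, hμ_re]

lemma IsPositive.norm_le_of_forall_not_hasEigenvalue (hT : T.IsPositive)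
    (hTc : IsCompactOperator T) {r : ℝ} (hr : 0 ≤ r)
    (h : ∀ μ : ℝ, r < μ → ¬HasEigenvalue (T : E →ₗ[ℂ] E) μ) : ‖T‖ ≤ r := by
  by_contra! hlt
  have hT0 : T ≠ 0 := by rintro rfl; simp at hlt; linarith
  exact h _ hlt (hT.hasEigenvalue_norm hTc hT0)

lemma IsPositive.limsup_re_inner_pow_le_norm_restrict (hT : T.IsPositive) {V : Submodule ℂ E}
    (hV : ∀ v ∈ V, T v ∈ V) {x : E} (hx : x ∈ V) :
    atTop.limsup (fun n : ℕ => (⟪(T ^ n) x, x⟫_ℂ).re ^ (1 / n : ℝ)) ≤ ‖T.restrict hV‖ := by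
  refine limsup_rpow_one_div_le (fun n => (hT.pow n).re_inner_nonneg_left x) (norm_nonneg (T.restrict hV))
    (sq_nonneg ‖x‖) ((eventually_ne_atTop 0).mono fun n hn => ?_)
  have h := (T.restrict hV).re_inner_pow_apply_self_le ⟨x, hx⟩ hn
  rwa [Submodule.coe_inner, coe_restrict_pow_apply] at h

lemma IsPositive.le_limsup_re_inner_pow (hT : T.IsPositive) {μ : ℝ} (hμ : 0 ≤ μ) {v : E}
    (hv : T v = (μ : ℂ) • v) {x : E} (hxv : ⟪x, v⟫_ℂ ≠ 0) :
    μ ≤ atTop.limsup (fun n : ℕ => (⟪(T ^ n) x, x⟫_ℂ).re ^ (1 / n : ℝ)) := by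
  have ha n : 0 ≤ (⟪(T ^ n) x, x⟫_ℂ).re := (hT.pow n).re_inner_nonneg_left x
  have hbdd := isBoundedUnder_rpow_one_div ha (norm_nonneg T) (sq_nonneg ‖x‖)
    ((eventually_ne_atTop 0).mono fun n hn => T.re_inner_pow_apply_self_le x hn)
  have hb : 0 < ‖⟪v, x⟫_ℂ‖ ^ 2 / ‖v‖ ^ 2 := by
    have : ⟪v, x⟫_ℂ ≠ 0 := fun h => hxv (inner_eq_zero_symm.mp h)
    have : v ≠ 0 := by rintro rfl; simp at this
    positivity
  refine le_limsup_rpow_one_div hbdd hμ hb (.of_forall fun n => ?_)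
  refine (hT.pow n).mul_norm_inner_sq_div_le ?_ x
  rw [pow_apply_of_apply_eq_smul hv, RCLike.ofReal_pow]; rfl

end Complex

end ContinuousLinearMap

open ContinuousLinearMap in
/-- For a positive compact operator `T` and `r ≥ 0`: `limsup ⟨T^n x,x⟩^{1/n} ≤ r` iff
`x` is orthogonal to every eigenvector of `T` with eigenvalue strictly greater than `r`. -/
theorem limsup_le_iff_orthogonal_eigenvectors {H : Type*} [NormedAddCommGroup H]
    [InnerProductSpace ℂ H] [CompleteSpace H]
    (T : H →L[ℂ] H) (hT : T.IsPositive) (hTc : IsCompactOperator (⇑T))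
    (r : ℝ) (hr : 0 ≤ r) (x : H) :
    atTop.limsup (fun n : ℕ => (⟪(T ^ n) x, x⟫_ℂ).re ^ (1 / n : ℝ)) ≤ r ↔
      ∀ μ : ℝ, r < μ → ∀ v : H, v ≠ 0 → T v = (μ : ℂ) • v → ⟪x, v⟫_ℂ = 0 := by
  constructor
  · intro hlim μ hμ v _ hv
    by_contra hxv
    linarith [hT.le_limsup_re_inner_pow (hr.trans hμ.le) hv hxv]
  · intro horth
    let f : Set.Ioi r → ℂ := fun μ => ((μ : ℝ) : ℂ)
    have hK := hT.isSymmetric.orthogonal_iSup_eigenspace_invariant f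
    have hxK : x ∈ (⨆ μ, eigenspace (T : H →ₗ[ℂ] H) (f μ))ᗮ := by
      rw [← Submodule.iInf_orthogonal, Submodule.mem_iInf]
      rintro ⟨μ, hμ⟩ v hv
      rcases eq_or_ne v 0 with rfl | hv0
      · exact inner_zero_left _
      · exact inner_eq_zero_symm.mp (horth μ hμ v hv0 (mem_eigenspace_iff.mp hv))
    calc _ ≤ ‖T.restrict hK‖ := hT.limsup_re_inner_pow_le_norm_restrict hK hxK
      _ ≤ r := (hT.restrict hK).norm_le_of_forall_not_hasEigenvalue (hTc.restrict' hK) hr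
          fun μ hμ => hT.isSymmetric.not_hasEigenvalue_restrict_orthogonal_iSup_eigenspace f ⟨μ, hμ⟩
end

section
/- Let H be a complex separable Hilbert space, let A be a compact bounded linear operator on H with ‖A‖ < 1, and let B be an operator-norm limit point of the sequence (|A^n|^{1/n})_{n≥1}. Then for every real r ≥ 0, V(A,r) ⊆ V(B,r). -/
open scoped NNReal InnerProductSpace
open Filter Topology

/-!
If `T ≥ 0`, `s > 0` and `n ≤ N`, the functional calculus applied to the scalar inequality
`t ^ n ≤ s ^ n + s ^ n (t / s) ^ N` turns `⟪T ^ N x, x⟫ ≤ s ^ N` into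
`⟪T ^ n x, x⟫ ≤ (‖x‖² + 1) s ^ n`.
For `T = |A ^ N| ^ (1 / N)` one has `T ^ N = |A ^ N|`, so for every `s` above the `limsup` defining
`x ∈ V(A, r)` this bound holds with `N = φ k` for all large `k`; letting `k → ∞` it passes to
`B = lim T`, which is positive, so that `|B ^ n| = B ^ n`. Taking `n`-th roots gives
`limsup ⟪|B ^ n| x, x⟫ ^ (1 / n) ≤ s`.
-/

section NthRoot

variable {u : ℕ → ℝ} {C s : ℝ}

lemma rpow_one_div_le_of_le_mul_pow {a : ℝ} {n : ℕ} (hn : n ≠ 0) (ha : 0 ≤ a) (hC : 0 ≤ C)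
    (hs : 0 ≤ s) (h : a ≤ C * s ^ n) : a ^ (1 / n : ℝ) ≤ C ^ (1 / n : ℝ) * s := by
  calc a ^ (1 / n : ℝ) ≤ (C * s ^ n) ^ (1 / n : ℝ) := by gcongr
    _ = C ^ (1 / n : ℝ) * s := by
      rw [Real.mul_rpow hC (by positivity), one_div, Real.pow_rpow_inv_natCast hs hn]

lemma tendsto_rpow_one_div_mul (hC : 0 < C) (s : ℝ) :
    Tendsto (fun n : ℕ => C ^ (1 / n : ℝ) * s) atTop (𝓝 s) := by
  have h : Tendsto (fun n : ℕ => C ^ (1 / n : ℝ)) atTop (𝓝 1) := by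
    simpa [Function.comp_def] using ((Real.continuousAt_const_rpow hC.ne').tendsto.comp
      tendsto_one_div_atTop_nhds_zero_nat)
  simpa using h.mul_const s

lemma eventually_rpow_one_div_le_s15 (hu : ∀ n, 0 ≤ u n) (hC : 0 ≤ C) (hs : 0 ≤ s)
    (h : ∀ᶠ n in atTop, u n ≤ C * s ^ n) :
    ∀ᶠ n in atTop, u n ^ (1 / n : ℝ) ≤ C ^ (1 / n : ℝ) * s := by
  filter_upwards [h, eventually_ne_atTop 0] with n hn hn0
  exact rpow_one_div_le_of_le_mul_pow hn0 (hu n) hC hs hn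

lemma isBoundedUnder_rpow_one_div_s15 (hu : ∀ n, 0 ≤ u n) (hC : 0 < C) (hs : 0 ≤ s)
    (h : ∀ᶠ n in atTop, u n ≤ C * s ^ n) :
    IsBoundedUnder (· ≤ ·) atTop fun n => u n ^ (1 / n : ℝ) :=
  (tendsto_rpow_one_div_mul hC s).isBoundedUnder_le.mono_le
    (eventually_rpow_one_div_le_s15 hu hC.le hs h)

lemma limsup_rpow_one_div_le_s15 (hu : ∀ n, 0 ≤ u n) (hC : 0 < C) (hs : 0 ≤ s)
    (h : ∀ᶠ n in atTop, u n ≤ C * s ^ n) :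
    limsup (fun n => u n ^ (1 / n : ℝ)) atTop ≤ s := by
  have hlim := tendsto_rpow_one_div_mul hC s
  refine (limsup_le_limsup (eventually_rpow_one_div_le_s15 hu hC.le hs h) ?_
    hlim.isBoundedUnder_le).trans_eq hlim.limsup_eq
  exact isCoboundedUnder_le_of_le atTop fun n => Real.rpow_nonneg (hu n) _

lemma eventually_le_pow_of_limsup_rpow_one_div_lt (hu : ∀ n, 0 ≤ u n)
    (hbdd : IsBoundedUnder (· ≤ ·) atTop fun n => u n ^ (1 / n : ℝ))
    (h : limsup (fun n => u n ^ (1 / n : ℝ)) atTop < s) :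
    ∀ᶠ n in atTop, u n ≤ s ^ n := by
  filter_upwards [eventually_lt_of_limsup_lt h hbdd, eventually_ne_atTop 0] with n hlt hn
  calc u n = (u n ^ (1 / n : ℝ)) ^ n := by rw [one_div, Real.rpow_inv_natCast_pow (hu n) hn]
    _ ≤ s ^ n := pow_le_pow_left₀ (Real.rpow_nonneg (hu n) _) hlt.le n

end NthRoot

lemma pow_le_add_div_mul_pow {t s : ℝ} {n N : ℕ} (ht : 0 ≤ t) (hs : 0 < s) (hnN : n ≤ N) :
    t ^ n ≤ s ^ n + s ^ n / s ^ N * t ^ N := by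
  rcases le_total t s with hts | hst
  · have : 0 ≤ s ^ n / s ^ N * t ^ N := by positivity
    linarith [pow_le_pow_left₀ ht hts n]
  · calc t ^ n = s ^ n * (t / s) ^ n := by rw [div_pow, mul_div_cancel₀ _ (by positivity)]
      _ ≤ s ^ n * (t / s) ^ N :=
        mul_le_mul_of_nonneg_left (pow_le_pow_right₀ ((one_le_div hs).mpr hst) hnN) (by positivity)
      _ = s ^ n / s ^ N * t ^ N := by rw [div_pow]; ring
      _ ≤ s ^ n + s ^ n / s ^ N * t ^ N := le_add_of_nonneg_left (by positivity)

section Operator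

variable {H : Type*} [NormedAddCommGroup H] [InnerProductSpace ℂ H]

lemma re_inner_nonneg_of_nonneg {P : H →L[ℂ] H} (h : 0 ≤ P) (x : H) : 0 ≤ (⟪P x, x⟫_ℂ).re :=
  ((ContinuousLinearMap.nonneg_iff_isPositive P).mp h).re_inner_nonneg_left x

lemma re_inner_le_re_inner_of_le {P Q : H →L[ℂ] H} (h : P ≤ Q) (x : H) :
    (⟪P x, x⟫_ℂ).re ≤ (⟪Q x, x⟫_ℂ).re := by
  have := ((ContinuousLinearMap.le_def P Q).mp h).re_inner_nonneg_left x
  rwa [sub_apply, inner_sub_left, map_sub, sub_nonneg] at this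

lemma re_inner_algebraMap_add_smul (S : H →L[ℂ] H) (a b : ℝ) (x : H) :
    (⟪(algebraMap ℝ (H →L[ℂ] H) a + b • S) x, x⟫_ℂ).re = a * ‖x‖ ^ 2 + b * (⟪S x, x⟫_ℂ).re := by
  simp only [Algebra.algebraMap_eq_smul_one, add_apply, smul_apply, one_apply_eq_self,
    inner_add_left, inner_smul_left_eq_smul, Complex.add_re, Complex.smul_re, smul_eq_mul]
  rw [← inner_self_eq_norm_sq (𝕜 := ℂ) x]
  rfl

variable [CompleteSpace H]

lemma opAbs_nonneg (T : H →L[ℂ] H) : 0 ≤ opAbs T := CFC.abs_nonneg T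

lemma opAbs_of_nonneg {T : H →L[ℂ] H} (hT : 0 ≤ T) : opAbs T = T := CFC.abs_of_nonneg T hT

lemma absPow_nonneg (T : H →L[ℂ] H) (n : ℕ) : 0 ≤ absPow T n := CFC.nnrpow_nonneg

lemma nonneg_of_tendsto_absPow {A B : H →L[ℂ] H} {φ : ℕ → ℕ}
    (hlim : Tendsto (fun k => absPow A (φ k)) atTop (𝓝 B)) : 0 ≤ B :=
  ge_of_tendsto' hlim fun k => absPow_nonneg A (φ k)

lemma absPow_pow_self (T : H →L[ℂ] H) {N : ℕ} (hN : N ≠ 0) :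
    absPow T N ^ N = opAbs (T ^ N) := by
  have hN' : (N : ℝ≥0) ≠ 0 := by exact_mod_cast hN
  rw [absPow, CFC.nnrpow_eq_pow, ← CFC.rpow_natCast _ N CFC.nnrpow_nonneg,
    ← NNReal.coe_natCast, ← CFC.nnrpow_eq_rpow (pos_iff_ne_zero.mpr hN')]
  exact CFC.nnrpow_inv_nnrpow _ hN' (CFC.abs_nonneg _)

lemma re_inner_opAbs_pow_le (T : H →L[ℂ] H) (x : H) (n : ℕ) :
    (⟪opAbs (T ^ n) x, x⟫_ℂ).re ≤ (‖x‖ ^ 2 + 1) * ‖T‖ ^ n := by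
  have hpow : ‖T ^ n‖ ≤ ‖T‖ ^ n := by
    rcases n with _ | n
    · rw [pow_zero, pow_zero]
      exact ContinuousLinearMap.norm_id_le
    · exact norm_pow_le' T n.succ_pos
  calc (⟪opAbs (T ^ n) x, x⟫_ℂ).re ≤ ‖opAbs (T ^ n) x‖ * ‖x‖ := re_inner_le_norm (𝕜 := ℂ) _ _
    _ ≤ ‖T ^ n‖ * ‖x‖ * ‖x‖ := by
      gcongr
      rw [← CFC.norm_abs (a := T ^ n)]
      exact (opAbs (T ^ n)).le_opNorm x
    _ ≤ ‖T‖ ^ n * ‖x‖ ^ 2 := by rw [mul_assoc, ← sq]; gcongr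
    _ ≤ (‖x‖ ^ 2 + 1) * ‖T‖ ^ n := by nlinarith [pow_nonneg (norm_nonneg T) n]

lemma pow_le_algebraMap_add_smul_pow {T : H →L[ℂ] H} (hT : 0 ≤ T) {s : ℝ} (hs : 0 < s)
    {n N : ℕ} (hnN : n ≤ N) :
    T ^ n ≤ algebraMap ℝ (H →L[ℂ] H) (s ^ n) + (s ^ n / s ^ N) • T ^ N := by
  have hT' : IsSelfAdjoint T := hT.isSelfAdjoint
  calc T ^ n = cfc (· ^ n : ℝ → ℝ) T := (cfc_pow_id T n).symm
    _ ≤ cfc (fun t : ℝ => s ^ n + s ^ n / s ^ N * t ^ N) T :=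
      cfc_mono fun t ht => pow_le_add_div_mul_pow (spectrum_nonneg_of_nonneg hT ht) hs hnN
    _ = algebraMap ℝ (H →L[ℂ] H) (s ^ n) + (s ^ n / s ^ N) • T ^ N := by
      rw [cfc_const_add _ _ T, cfc_const_mul _ _ T, cfc_pow_id T N]

lemma re_inner_pow_le_of_re_inner_pow_le {T : H →L[ℂ] H} (hT : 0 ≤ T) {s : ℝ} (hs : 0 < s)
    {n N : ℕ} (hnN : n ≤ N) {x : H} (h : (⟪(T ^ N) x, x⟫_ℂ).re ≤ s ^ N) :
    (⟪(T ^ n) x, x⟫_ℂ).re ≤ (‖x‖ ^ 2 + 1) * s ^ n := by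
  calc (⟪(T ^ n) x, x⟫_ℂ).re
      ≤ (⟪(algebraMap ℝ (H →L[ℂ] H) (s ^ n) + (s ^ n / s ^ N) • T ^ N) x, x⟫_ℂ).re :=
        re_inner_le_re_inner_of_le (pow_le_algebraMap_add_smul_pow hT hs hnN) x
    _ = s ^ n * ‖x‖ ^ 2 + s ^ n / s ^ N * (⟪(T ^ N) x, x⟫_ℂ).re :=
        re_inner_algebraMap_add_smul _ _ _ x
    _ ≤ s ^ n * ‖x‖ ^ 2 + s ^ n / s ^ N * s ^ N := by gcongr
    _ = (‖x‖ ^ 2 + 1) * s ^ n := by field_simp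

lemma re_inner_pow_le_of_tendsto_absPow {A B : H →L[ℂ] H} {φ : ℕ → ℕ}
    (hφ : Tendsto φ atTop atTop) (hlim : Tendsto (fun k => absPow A (φ k)) atTop (𝓝 B))
    {s : ℝ} (hs : 0 < s) {x : H} (hA : ∀ᶠ N in atTop, (⟪opAbs (A ^ N) x, x⟫_ℂ).re ≤ s ^ N)
    (n : ℕ) : (⟪(B ^ n) x, x⟫_ℂ).re ≤ (‖x‖ ^ 2 + 1) * s ^ n := by
  have hcont : Continuous fun T : H →L[ℂ] H => (⟪T x, x⟫_ℂ).re := by fun_prop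
  refine le_of_tendsto (hcont.continuousAt.tendsto.comp (hlim.pow n)) ?_
  filter_upwards [hφ.eventually hA, hφ.eventually (eventually_ge_atTop (max n 1))]
    with k hk hnk
  refine re_inner_pow_le_of_re_inner_pow_le (absPow_nonneg A (φ k)) hs (le_of_max_le_left hnk) ?_
  rwa [absPow_pow_self A (by omega)]

end Operator

theorem V_subset_V_of_limit_point_general {H : Type*} [NormedAddCommGroup H]
    [InnerProductSpace ℂ H] [CompleteSpace H]
    (A : H →L[ℂ] H) (B : H →L[ℂ] H)
    (hB : ∃ φ : ℕ → ℕ, StrictMono φ ∧ Tendsto (fun k : ℕ => absPow A (φ k)) atTop (𝓝 B))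
    (r : ℝ) (hr : 0 ≤ r) :
    {x : H | atTop.limsup (fun n : ℕ => (⟪opAbs (A ^ n) x, x⟫_ℂ).re ^ (1 / n : ℝ)) ≤ r} ⊆
    {x : H | atTop.limsup (fun n : ℕ => (⟪opAbs (B ^ n) x, x⟫_ℂ).re ^ (1 / n : ℝ)) ≤ r} := by
  obtain ⟨φ, hφ, hlim⟩ := hB
  have hB0 : 0 ≤ B := nonneg_of_tendsto_absPow hlim
  have hAbsB (n : ℕ) : opAbs (B ^ n) = B ^ n := opAbs_of_nonneg (CStarAlgebra.pow_nonneg hB0 n)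
  intro x hx
  simp only [Set.mem_ofPred_eq, hAbsB] at hx ⊢
  refine le_of_forall_gt_imp_ge_of_dense fun s hrs => ?_
  have hs : 0 < s := hr.trans_lt hrs
  have hA_nonneg (n : ℕ) : 0 ≤ (⟪opAbs (A ^ n) x, x⟫_ℂ).re :=
    re_inner_nonneg_of_nonneg (opAbs_nonneg _) x
  -- `limsup` on `ℝ` is junk (`0`) for sequences unbounded above, so boundedness must be supplied.
  have hAx : ∀ᶠ N in atTop, (⟪opAbs (A ^ N) x, x⟫_ℂ).re ≤ s ^ N :=
    eventually_le_pow_of_limsup_rpow_one_div_lt hA_nonneg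
      (isBoundedUnder_rpow_one_div_s15 hA_nonneg (by positivity) (norm_nonneg A)
        (.of_forall (re_inner_opAbs_pow_le A x)))
      (hx.trans_lt hrs)
  exact limsup_rpow_one_div_le_s15
    (fun n => re_inner_nonneg_of_nonneg (CStarAlgebra.pow_nonneg hB0 n) x) (by positivity) hs.le
    (.of_forall (re_inner_pow_le_of_tendsto_absPow hφ.tendsto_atTop hlim hs hAx))

/-- If `A` is compact with `‖A‖ < 1` and `B` is an operator-norm limit point of
`(|A^n|^{1/n})`, then `V(A,r) ⊆ V(B,r)` for every `r ≥ 0`. -/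
theorem V_subset_V_of_limit_point {H : Type*} [NormedAddCommGroup H]
    [InnerProductSpace ℂ H] [CompleteSpace H] [TopologicalSpace.SeparableSpace H]
    (A : H →L[ℂ] H) (hA : IsCompactOperator (⇑A)) (hnorm : ‖A‖ < 1)
    (B : H →L[ℂ] H)
    (hB : ∃ φ : ℕ → ℕ, StrictMono φ ∧ Tendsto (fun k : ℕ => absPow A (φ k)) atTop (𝓝 B))
    (r : ℝ) (hr : 0 ≤ r) :
    {x : H | atTop.limsup (fun n : ℕ => (⟪opAbs (A ^ n) x, x⟫_ℂ).re ^ (1 / n : ℝ)) ≤ r} ⊆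
    {x : H | atTop.limsup (fun n : ℕ => (⟪opAbs (B ^ n) x, x⟫_ℂ).re ^ (1 / n : ℝ)) ≤ r} :=
  V_subset_V_of_limit_point_general A B hB r hr
end
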